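/- For every nonnegative integer k and every complex z with Re(z) > 0, the inverse power admits the convergent factorial series 1/z^{k+1} = Σ_{κ=0}^{∞} (-1)^κ S¹(k+κ, k) / ((z)_{k+κ+1}). -/

import Mathlib

/-!
Write `c(n, k) = (-1)^(n+k) S¹(n, k)` for the unsigned Stirling numbers and
`S_k(N) = ∑_{n<N} c(n, k) / (z)_{n+1}`; the terms with `n < k` vanish, so the claim is
`S_k(N) → z^{-(k+1)}`. Writing `z = (z + N) - N` and using `c(n+1, k+1) = n c(n, k+1) + c(n, k)`
gives `z S_{k+1}(N) = S_k(N) - c(N, k+1) / (z)_N`, while `S_0(N) = 1/z`, so induction on `k`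
reduces everything to `c(N, j) / (z)_N → 0`. For `0 < y < Re z = x`, comparing coefficients in
`(y)_N = ∑_j c(N, j) y^j` gives `|c(N, j) / (z)_N| ≤ c(N, j) / (x)_N ≤ y^{-j} (y)_N / (x)_N`, and
`(y)_N / (x)_N → 0` by Euler's limit formula for `Γ`.
-/

open Filter

noncomputable def poch (z : ℂ) (m : ℕ) : ℂ := ∏ i ∈ Finset.range m, (z + i)

def S1 : ℕ → ℕ → ℤ
  | 0, 0 => 1
  | 0, _ + 1 => 0
  | n + 1, 0 => -(n : ℤ) * S1 n 0
  | n + 1, k + 1 => S1 n k - (n : ℤ) * S1 n (k + 1)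

open Finset Nat Topology

theorem S1_eq_neg_one_pow_mul_stirlingFirst : ∀ n k : ℕ,
    S1 n k = (-1) ^ (n + k) * stirlingFirst n k
  | 0, 0 => rfl
  | 0, k + 1 => by simp [S1]
  | n + 1, 0 => by
    simp only [S1, S1_eq_neg_one_pow_mul_stirlingFirst n 0]
    rcases n with _ | n <;> simp
  | n + 1, k + 1 => by
    rw [S1, S1_eq_neg_one_pow_mul_stirlingFirst n k, S1_eq_neg_one_pow_mul_stirlingFirst n (k + 1),
      stirlingFirst_succ_succ]
    push_cast
    ring

theorem stirlingFirst_mul_pow_le_prod {y : ℝ} (hy : 0 ≤ y) :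
    ∀ n j : ℕ, stirlingFirst n j * y ^ j ≤ ∏ i ∈ range n, (y + i)
  | 0, 0 => by simp
  | 0, j + 1 => by simp
  | n + 1, 0 => by simp only [stirlingFirst_succ_zero, CharP.cast_eq_zero, zero_mul]; positivity
  | n + 1, j + 1 => by
    have h₁ := stirlingFirst_mul_pow_le_prod hy n j
    have h₂ := stirlingFirst_mul_pow_le_prod hy n (j + 1)
    rw [stirlingFirst_succ_succ, prod_range_succ]
    push_cast
    calc ((n : ℝ) * stirlingFirst n (j + 1) + stirlingFirst n j) * y ^ (j + 1)
        = n * (stirlingFirst n (j + 1) * y ^ (j + 1)) + y * (stirlingFirst n j * y ^ j) := by ring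
      _ ≤ n * ∏ i ∈ range n, (y + i) + y * ∏ i ∈ range n, (y + i) := by gcongr
      _ = (∏ i ∈ range n, (y + i)) * (y + n) := by ring

theorem tendsto_prod_add_div_prod_add {x y : ℝ} (hy : 0 < y) (hyx : y < x) :
    Tendsto (fun n : ℕ => (∏ i ∈ range n, (y + i)) / ∏ i ∈ range n, (x + i)) atTop (𝓝 0) := by
  rw [← tendsto_add_atTop_iff_nat 1]
  -- Euler: `∏_{i ≤ n} (s + i) = n^s n! / GammaSeq s n` with `GammaSeq s n → Γ(s)`.
  have hpow : Tendsto (fun n : ℕ => (n : ℝ) ^ (y - x)) atTop (𝓝 0) := by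
    rw [← neg_sub]
    exact (tendsto_rpow_neg_atTop (sub_pos.2 hyx)).comp tendsto_natCast_atTop_atTop
  have hΓ := ((Real.GammaSeq_tendsto_Gamma x).div (Real.GammaSeq_tendsto_Gamma y)
    (Real.Gamma_pos_of_pos hy).ne').mul hpow
  rw [mul_zero] at hΓ
  refine hΓ.congr' ?_
  filter_upwards [eventually_ge_atTop 1] with n hn
  have hn : (0 : ℝ) < n := by exact_mod_cast hn
  have hprod : ∀ s : ℝ, 0 < s → 0 < ∏ i ∈ range (n + 1), (s + i) :=
    fun s hs => prod_pos fun i _ => by positivity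
  simp only [Pi.div_apply, Real.GammaSeq, Real.rpow_sub hn]
  have := hprod x (hy.trans hyx)
  have := hprod y hy
  field_simp

theorem poch_succ (z : ℂ) (n : ℕ) : poch z (n + 1) = poch z n * (z + n) :=
  prod_range_succ _ _

theorem poch_ne_zero {z : ℂ} (hz : ∀ i : ℕ, z + i ≠ 0) (n : ℕ) : poch z n ≠ 0 :=
  prod_ne_zero_iff.2 fun i _ => hz i

theorem add_natCast_ne_zero_of_re_pos {z : ℂ} (hz : 0 < z.re) (i : ℕ) : z + i ≠ 0 := by
  intro h
  have := congrArg Complex.re h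
  simp only [Complex.add_re, Complex.natCast_re, Complex.zero_re] at this
  linarith [i.cast_nonneg (α := ℝ)]

theorem prod_re_add_le_norm_poch {z : ℂ} (hz : 0 ≤ z.re) (n : ℕ) :
    ∏ i ∈ range n, (z.re + i) ≤ ‖poch z n‖ := by
  rw [poch, norm_prod]
  refine prod_le_prod (fun i _ => by positivity) fun i _ => ?_
  simpa using Complex.re_le_norm (z + i)

theorem tendsto_stirlingFirst_div_poch {z : ℂ} (hz : 0 < z.re) (j : ℕ) :
    Tendsto (fun n => (stirlingFirst n j : ℂ) / poch z n) atTop (𝓝 0) := by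
  set x := z.re
  set y := x / 2
  have hy : 0 < y := half_pos hz
  have hratio := (tendsto_prod_add_div_prod_add hy (half_lt_self hz)).div_const (y ^ j)
  rw [zero_div] at hratio
  refine squeeze_zero_norm (fun n => ?_) hratio
  have hx : 0 < ∏ i ∈ range n, (x + i) := prod_pos fun i _ => by positivity
  rw [norm_div, Complex.norm_natCast, div_right_comm]
  calc (stirlingFirst n j : ℝ) / ‖poch z n‖ ≤ stirlingFirst n j / ∏ i ∈ range n, (x + i) :=
        div_le_div_of_nonneg_left (by positivity) hx (prod_re_add_le_norm_poch hz.le n)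
    _ ≤ (∏ i ∈ range n, (y + i)) / y ^ j / ∏ i ∈ range n, (x + i) := by
        gcongr
        exact (le_div_iff₀ (by positivity)).2 (stirlingFirst_mul_pow_le_prod hy.le n j)

noncomputable def stirlingFactorialSum (z : ℂ) (k N : ℕ) : ℂ :=
  ∑ n ∈ range N, (stirlingFirst n k : ℂ) / poch z (n + 1)

theorem mul_stirlingFactorialSum_succ {z : ℂ} (hz : ∀ i : ℕ, z + i ≠ 0) (k N : ℕ) :
    z * stirlingFactorialSum z (k + 1) N
      = stirlingFactorialSum z k N - stirlingFirst N (k + 1) / poch z N := by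
  induction N with
  | zero => simp [stirlingFactorialSum]
  | succ N ih =>
    simp only [stirlingFactorialSum] at ih ⊢
    rw [sum_range_succ, sum_range_succ, mul_add, ih, stirlingFirst_succ_succ, poch_succ]
    have := poch_ne_zero hz N
    have := hz N
    push_cast
    field_simp
    ring

theorem tendsto_stirlingFactorialSum {z : ℂ} (hz : 0 < z.re) (k : ℕ) :
    Tendsto (stirlingFactorialSum z k) atTop (𝓝 (1 / z ^ (k + 1))) := by
  have hz' := add_natCast_ne_zero_of_re_pos hz
  have hz₀ : z ≠ 0 := by simpa using hz' 0
  induction k with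
  | zero =>
    refine tendsto_const_nhds.congr' ?_
    filter_upwards [eventually_ge_atTop 1] with N hN
    obtain ⟨N, rfl⟩ := Nat.exists_eq_add_of_le' hN
    simp [stirlingFactorialSum, sum_range_succ', poch]
  | succ k ih =>
    have h := (ih.sub (tendsto_stirlingFirst_div_poch hz (k + 1))).div_const z
    rw [sub_zero, div_div, ← pow_succ] at h
    refine h.congr fun N => ?_
    rw [← mul_stirlingFactorialSum_succ hz', mul_div_cancel_left₀ _ hz₀]

theorem stmt15 (k : ℕ) (z : ℂ) (hz : 0 < z.re) :
    Tendsto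
      (fun N => ∑ κ ∈ Finset.range N, (-1) ^ κ * (S1 (k + κ) k : ℂ) / poch z (k + κ + 1))
      atTop (nhds (1 / z ^ (k + 1))) := by
  have hsign (κ : ℕ) : (-1) ^ κ * (S1 (k + κ) k : ℂ) = stirlingFirst (k + κ) k := by
    rw [S1_eq_neg_one_pow_mul_stirlingFirst, Int.cast_mul, Int.cast_pow, ← mul_assoc, Int.cast_neg,
      Int.cast_one, ← pow_add, show κ + (k + κ + k) = 2 * (k + κ) by ring, pow_mul, neg_one_sq,
      one_pow, one_mul, Int.cast_natCast]
  refine ((tendsto_stirlingFactorialSum hz k).comp (tendsto_add_atTop_nat k)).congr fun N => ?_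
  have hlow : ∑ n ∈ range k, (stirlingFirst n k : ℂ) / poch z (n + 1) = 0 :=
    sum_eq_zero fun n hn => by simp [stirlingFirst_eq_zero_of_lt (mem_range.1 hn)]
  rw [Function.comp_apply, stirlingFactorialSum, add_comm N k, sum_range_add, hlow, zero_add]
  simp only [hsign]
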